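/- Let G be a group that is normally generated by an element μ, and let N be a normal subgroup of G such that G/N is a free product A * B of two nontrivial groups. Then the image of μ in G/N cannot be conjugate into the factor A. -/
import Mathlib


/-- If `G` is normally generated by `μ` and `G/N` is isomorphic to a free product
`A ∗ B` of two nontrivial groups, then the image of `μ` in `G/N` is not conjugate
into the factor `A`. -/
theorem stmt_3 {G A B : Type*} [Group G] [Group A] [Group B]
    [Nontrivial A] [Nontrivial B]
    (μ : G) (hμ : Subgroup.normalClosure {μ} = ⊤)
    (N : Subgroup G) [N.Normal]
    (e : (G ⧸ N) ≃* Monoid.Coprod A B) :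
    ¬ ∃ (x : Monoid.Coprod A B) (a : A),
        e (QuotientGroup.mk μ) = x * Monoid.Coprod.inl a * x⁻¹ := by
  rintro ⟨x, a, hx⟩
  set f : G →* Monoid.Coprod A B := e.toMonoidHom.comp (QuotientGroup.mk' N) with hf
  have hfs : Function.Surjective f := e.surjective.comp (QuotientGroup.mk'_surjective N)
  have hcl : Subgroup.normalClosure {f μ} = ⊤ := by
    have := Subgroup.map_normalClosure {μ} f hfs
    rw [hμ, Set.image_singleton] at this
    rw [← this, Subgroup.map_top_of_surjective f hfs]
  set φ : Monoid.Coprod A B →* B := Monoid.Coprod.lift 1 (MonoidHom.id B) with hφ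
  have hker : φ (f μ) = 1 := by
    have : f μ = x * Monoid.Coprod.inl a * x⁻¹ := hx
    simp [this, hφ]
  have hle : Subgroup.normalClosure {f μ} ≤ φ.ker := by
    apply Subgroup.normalClosure_le_normal
    simpa [MonoidHom.mem_ker] using hker
  rw [hcl, top_le_iff] at hle
  obtain ⟨b, hb⟩ := exists_ne (1 : B)
  have : φ (Monoid.Coprod.inr b) = 1 := by
    have : Monoid.Coprod.inr b ∈ φ.ker := hle ▸ Subgroup.mem_top _
    exact this
  simp [hφ] at this
  exact hb this
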